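/- arXiv:1506.00350 — 4 statements merged into one kernel-verified Lean document; each statement's English description precedes it below -/
import Mathlib

section
/- Let φ(x) = ∑_{n≥0} αₙ xⁿ be a formal power series with real coefficients such that α₀ ≠ 0, 2α₂α₀ − α₁² ≥ 0, and there exists n ≥ 2 with n!·αₙ·α₀^{n−1} ≠ α₁ⁿ (i.e., φ is not of the form c·e^{γx} with c ≠ 0). Set p = min{n ≥ 2 : n!·αₙ·α₀^{n−1} ≠ α₁ⁿ}. If f is a real polynomial with deg f ≥ p, then there is a positive integer m₀ such that for all m ≥ m₀ the polynomial φ(D)^m f has at least one nonreal complex zero. -/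
open Polynomial Nat

/-- `φ(D)f = ∑ₙ αₙ f⁽ⁿ⁾` (a finite sum). -/
noncomputable def phiD (α : ℕ → ℝ) (f : Polynomial ℝ) : Polynomial ℝ :=
  ∑ n ∈ Finset.range (f.natDegree + 1), α n • (Polynomial.derivative^[n] f)

/-!
Write `φ(x) = c e^{rx} + ψ(x)` with `c = α₀`, `r = α₁ / α₀` and `ψ(x) = ∑ δₙ xⁿ`; the minimality
of `p` says that `ψ` vanishes to order exactly `p`. As `e^{rD}` is the shift `g(x) ↦ g(x + r)`,
the shifted iterates `G_m(x) = (φ(D)^m f)(x - m r)` satisfy `G_{m+1} = c G_m + (ψ(D) G_m)(x - r)`,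
and `ψ(D)` lowers degrees by `p`. Hence the top `p` coefficients of `c^{-m} G_m` are those of `f`,
while the next one grows linearly in `m`. If `G_m` had only real roots, its first two coefficients
would bound the sum of the squares of its roots (for `p = 2` this uses `2α₂α₀ ≥ α₁²`), hence all
roots, hence all their elementary symmetric functions, contradicting the linear growth of the
`p`-th one.
-/

namespace Multiset

variable {R : Type*} [CommSemiring R]

theorem esymm_cons_succ (a : R) (s : Multiset R) (n : ℕ) :
    (a ::ₘ s).esymm (n + 1) = a * s.esymm n + s.esymm (n + 1) := by
  simp only [esymm, powersetCard_cons, map_add, sum_add, map_map, Function.comp_def, prod_cons,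
    sum_map_mul_left, add_comm]

theorem esymm_one (s : Multiset R) : s.esymm 1 = s.sum := by
  simp [esymm, powersetCard_one, map_map]

theorem sq_sum_eq_sum_map_sq_add_two_mul_esymm_two (s : Multiset R) :
    s.sum ^ 2 = (s.map (· ^ 2)).sum + 2 * s.esymm 2 := by
  induction s using Multiset.induction with
  | empty => simp [esymm, powersetCard_zero_right]
  | cons a s ih =>
    rw [sum_cons, map_cons, sum_cons, esymm_cons_succ, esymm_one, add_sq, ih]
    ring

theorem abs_prod_le_pow_card {s : Multiset ℝ} {B : ℝ} (h : ∀ r ∈ s, |r| ≤ B) :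
    |s.prod| ≤ B ^ card s := by
  induction s using Multiset.induction with
  | empty => simp
  | cons a s ih =>
    rw [prod_cons, card_cons, abs_mul, _root_.pow_succ']
    have ha := h a (mem_cons_self a s)
    exact mul_le_mul ha (ih fun r hr => h r (mem_cons_of_mem hr)) (abs_nonneg _)
      ((abs_nonneg a).trans ha)

theorem abs_esymm_le {s : Multiset ℝ} {B : ℝ} (h : ∀ r ∈ s, |r| ≤ B) (k : ℕ) :
    |s.esymm k| ≤ (card s).choose k * B ^ k := by
  refine abs_sum_le_sum_abs.trans ?_
  rw [map_map, ← card_powersetCard k s, ← nsmul_eq_mul, ← card_map (abs ∘ prod)]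
  refine sum_le_card_nsmul _ _ fun x hx => ?_
  obtain ⟨t, ht, rfl⟩ := mem_map.mp hx
  obtain ⟨hts, rfl⟩ := mem_powersetCard.mp ht
  exact abs_prod_le_pow_card fun r hr => h r (mem_of_le hts hr)

theorem abs_esymm_le_sqrt {s : Multiset ℝ} {S : ℝ} (hS : s.esymm 1 ^ 2 - 2 * s.esymm 2 ≤ S)
    (k : ℕ) : |s.esymm k| ≤ (card s).choose k * √S ^ k := by
  rw [esymm_one, sq_sum_eq_sum_map_sq_add_two_mul_esymm_two] at hS
  refine abs_esymm_le (fun r hr => ?_) k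
  rw [← Real.sqrt_sq_eq_abs]
  refine Real.sqrt_le_sqrt ((single_le_sum (fun x hx => ?_) _
    (mem_map_of_mem (· ^ 2) hr)).trans (by linarith))
  obtain ⟨y, -, rfl⟩ := mem_map.mp hx
  positivity

end Multiset

namespace Polynomial

theorem iterate_derivative_taylor {R : Type*} [CommSemiring R] (r : R) (g : R[X]) (n : ℕ) :
    derivative^[n] (taylor r g) = taylor r (derivative^[n] g) := by
  induction n with
  | zero => rfl
  | succ n ih =>
    rw [Function.iterate_succ_apply', ih, Function.iterate_succ_apply', taylor_apply,
      taylor_apply, derivative_comp]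
    simp

theorem coeff_taylor_of_natDegree_le {R : Type*} [CommSemiring R] (r : R) {g : R[X]} {n : ℕ}
    (hn : g.natDegree ≤ n) : (taylor r g).coeff n = g.coeff n := by
  rcases hn.lt_or_eq with hlt | rfl
  · rw [coeff_eq_zero_of_natDegree_lt hlt,
      coeff_eq_zero_of_natDegree_lt (by rwa [natDegree_taylor])]
  · exact coeff_taylor_natDegree r g

variable {K : Type*} [Field K] [CharZero K]

theorem taylor_eq_sum_hasseDeriv (r : K) {g : K[X]} {N : ℕ} (hN : g.natDegree ≤ N) :
    taylor r g = ∑ n ∈ Finset.range (N + 1), r ^ n • hasseDeriv n g := by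
  refine Polynomial.funext fun x => ?_
  rw [taylor_eval, eval_finsetSum, add_comm, ← taylor_eval,
    eval_eq_sum_range' (n := N + 1) (by rw [natDegree_taylor]; omega)]
  simp [taylor_coeff, mul_comm]

theorem taylor_eq_sum_iterate_derivative (r : K) {g : K[X]} {N : ℕ} (hN : g.natDegree ≤ N) :
    taylor r g = ∑ n ∈ Finset.range (N + 1), (r ^ n / n !) • derivative^[n] g := by
  rw [taylor_eq_sum_hasseDeriv r hN]
  refine Finset.sum_congr rfl fun n _ => ?_
  rw [← factorial_smul_hasseDeriv, LinearMap.smul_apply, ← Nat.cast_smul_eq_nsmul K, smul_smul,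
    div_mul_cancel₀ _ (Nat.cast_ne_zero.mpr (factorial_ne_zero n))]

theorem splits_of_forall_im_eq_zero {g : ℝ[X]}
    (h : ∀ z ∈ (g.map (algebraMap ℝ ℂ)).roots, z.im = 0) : g.Splits :=
  Splits.of_splits_map _ (IsAlgClosed.splits _) fun z hz => ⟨z.re, Complex.ext rfl (h z hz).symm⟩

theorem Splits.esymm_roots_eq {F : Type*} [Field F] {G : F[X]} (hG : G.Splits) (h0 : G ≠ 0)
    {k : ℕ} (hk : k ≤ G.natDegree) :
    G.roots.esymm k = (-1) ^ k * (G.coeff (G.natDegree - k) / G.leadingCoeff) := by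
  rw [coeff_eq_esymm_roots_of_splits hG (Nat.sub_le _ _), Nat.sub_sub_self hk]
  field_simp
  simp [← pow_mul, pow_mul', leadingCoeff_ne_zero.mpr h0]

end Polynomial

section PhiD

variable {α δ : ℕ → ℝ}

theorem phiD_eq_sum_range (α : ℕ → ℝ) {g : ℝ[X]} {N : ℕ} (hN : g.natDegree ≤ N) :
    phiD α g = ∑ n ∈ Finset.range (N + 1), α n • derivative^[n] g := by
  refine Finset.sum_subset (Finset.range_subset_range.mpr (by omega)) fun n _ hn => ?_
  rw [Finset.mem_range, not_lt] at hn
  rw [iterate_derivative_eq_zero (by omega), smul_zero]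

theorem phiD_taylor (α : ℕ → ℝ) (r : ℝ) (g : ℝ[X]) :
    phiD α (taylor r g) = taylor r (phiD α g) := by
  rw [phiD_eq_sum_range α (natDegree_taylor g r).le, phiD, map_sum]
  simp only [LinearMap.map_smul, iterate_derivative_taylor]

theorem phiD_eq_smul_taylor_add {c r : ℝ} (hα : ∀ n, α n = c * (r ^ n / n !) + δ n) (g : ℝ[X]) :
    phiD α g = c • taylor r g + phiD δ g := by
  simp only [phiD, hα, add_smul, Finset.sum_add_distrib, taylor_eq_sum_iterate_derivative r le_rfl,
    Finset.smul_sum, smul_smul]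

theorem natDegree_phiD_le {p d : ℕ} (hδ : ∀ n < p, δ n = 0) {g : ℝ[X]} (hg : g.natDegree ≤ d) :
    (phiD δ g).natDegree ≤ d - p := by
  refine natDegree_sum_le_of_forall_le _ _ fun n _ => ?_
  rcases lt_or_ge n p with hn | hn
  · simp [hδ n hn]
  · exact (natDegree_smul_le _ _).trans ((natDegree_iterate_derivative g n).trans (by omega))

theorem coeff_phiD_sub {p d : ℕ} (hδ : ∀ n < p, δ n = 0) (hpd : p ≤ d) {g : ℝ[X]}
    (hg : g.natDegree ≤ d) : (phiD δ g).coeff (d - p) = δ p * d.descFactorial p * g.coeff d := by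
  rw [phiD_eq_sum_range δ hg, finsetSum_coeff, Finset.sum_eq_single_of_mem p
    (Finset.mem_range.mpr (by omega)) fun n _ hnp => ?_]
  · rw [coeff_smul, coeff_iterate_derivative, Nat.sub_add_cancel hpd, smul_eq_mul, nsmul_eq_mul]
    ring
  · rcases lt_or_gt_of_ne hnp with hn | hn
    · simp [hδ n hn]
    · rw [coeff_smul, coeff_iterate_derivative, coeff_eq_zero_of_natDegree_lt (by omega),
        smul_zero, smul_zero]

theorem natDegree_iterate_phiD_le (α : ℕ → ℝ) (f : ℝ[X]) (m : ℕ) :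
    ((phiD α)^[m] f).natDegree ≤ f.natDegree := by
  induction m with
  | zero => rfl
  | succ m ih =>
    rw [Function.iterate_succ_apply']
    exact natDegree_phiD_le (p := 0) (fun n hn => absurd hn n.not_lt_zero) ih

end PhiD

section Iterate

variable {α δ : ℕ → ℝ} {c r : ℝ} {p d : ℕ}

theorem taylor_iterate_phiD_succ (hα : ∀ n, α n = c * (r ^ n / n !) + δ n) (f : ℝ[X]) (m : ℕ) :
    taylor (-((m + 1 : ℕ) * r)) ((phiD α)^[m + 1] f) =
      c • taylor (-(m * r)) ((phiD α)^[m] f) +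
        taylor (-r) (phiD δ (taylor (-(m * r)) ((phiD α)^[m] f))) := by
  rw [Function.iterate_succ_apply', ← phiD_taylor, show -((m + 1 : ℕ) * r) = -r + -(m * r) by
    push_cast; ring, ← taylor_taylor, phiD_eq_smul_taylor_add hα,
    taylor_taylor, add_neg_cancel, taylor_zero, phiD_taylor]

theorem coeff_taylor_iterate_phiD (hc : c ≠ 0) (hα : ∀ n, α n = c * (r ^ n / n !) + δ n)
    (hδ : ∀ n < p, δ n = 0) (hp : 0 < p) (hpd : p ≤ d) {f : ℝ[X]} (hf : f.natDegree ≤ d)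
    (m : ℕ) {k : ℕ} (hk : d - p ≤ k) :
    (taylor (-(m * r)) ((phiD α)^[m] f)).coeff k = c ^ m * (f.coeff k +
      if k = d - p then m * (δ p / c * d.descFactorial p) * f.coeff d else 0) := by
  induction m generalizing k with
  | zero => simp
  | succ m ih =>
    set G := taylor (-(m * r)) ((phiD α)^[m] f)
    have hG : G.natDegree ≤ d :=
      (natDegree_taylor _ _).trans_le ((natDegree_iterate_phiD_le α f m).trans hf)
    have hE := natDegree_phiD_le hδ hG
    rw [taylor_iterate_phiD_succ hα, coeff_add, coeff_smul, ih hk, smul_eq_mul]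
    rcases hk.eq_or_lt with rfl | hlt
    · rw [coeff_taylor_of_natDegree_le _ hE, coeff_phiD_sub hδ hpd hG, ih (Nat.sub_le d p),
        if_neg (show d ≠ d - p by omega), if_pos rfl, if_pos rfl]
      push_cast
      field_simp
      ring
    · rw [coeff_eq_zero_of_natDegree_lt ((natDegree_taylor _ _).trans_lt (hE.trans_lt hlt)),
        if_neg hlt.ne', if_neg hlt.ne']
      ring

theorem natDegree_taylor_iterate_phiD (hc : c ≠ 0) (hα : ∀ n, α n = c * (r ^ n / n !) + δ n)
    (hδ : ∀ n < p, δ n = 0) (hp : 0 < p) {f : ℝ[X]} (hpf : p ≤ f.natDegree) (m : ℕ) :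
    (taylor (-(m * r)) ((phiD α)^[m] f)).natDegree = f.natDegree ∧
      (taylor (-(m * r)) ((phiD α)^[m] f)).leadingCoeff = c ^ m * f.leadingCoeff := by
  have hcoeff :
      (taylor (-(m * r)) ((phiD α)^[m] f)).coeff f.natDegree = c ^ m * f.leadingCoeff := by
    rw [coeff_taylor_iterate_phiD hc hα hδ hp hpf le_rfl m (Nat.sub_le _ p), if_neg (by omega),
      add_zero, leadingCoeff]
  have hdeg := natDegree_eq_of_le_of_coeff_ne_zero
    ((natDegree_taylor _ _).trans_le (natDegree_iterate_phiD_le α f m)) (hcoeff ▸ mul_ne_zero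
      (pow_ne_zero m hc) (leadingCoeff_ne_zero.mpr (ne_zero_of_natDegree_gt (n := 0) (by omega))))
  exact ⟨hdeg, by rw [leadingCoeff, hdeg, hcoeff]⟩

theorem abs_coeff_add_mul_le_of_splits (hc : c ≠ 0) (hα : ∀ n, α n = c * (r ^ n / n !) + δ n)
    (hδ : ∀ n < p, δ n = 0) (hp : 2 ≤ p) (hδ2 : p = 2 → 0 ≤ δ p / c) {f : ℝ[X]}
    (hpf : p ≤ f.natDegree) {m : ℕ} (hs : ((phiD α)^[m] f).Splits) :
    |f.coeff (f.natDegree - p) / f.leadingCoeff + m * (δ p / c * f.natDegree.descFactorial p)| ≤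
      f.natDegree.choose p * √((f.coeff (f.natDegree - 1) / f.leadingCoeff) ^ 2 -
        2 * (f.coeff (f.natDegree - 2) / f.leadingCoeff)) ^ p := by
  obtain ⟨hGdeg, hlc⟩ := natDegree_taylor_iterate_phiD hc hα hδ (by omega) hpf m
  have hcoeff {k : ℕ} (hk : f.natDegree - p ≤ k) :=
    coeff_taylor_iterate_phiD hc hα hδ (by omega) hpf le_rfl m hk
  set d := f.natDegree
  set a := f.leadingCoeff
  set κ := δ p / c * d.descFactorial p
  set G := taylor (-(m * r)) ((phiD α)^[m] f)
  have ha : a ≠ 0 := leadingCoeff_ne_zero.mpr (ne_zero_of_natDegree_gt (n := 0) (by omega))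
  have hG0 : G ≠ 0 := fun h => by simp [h, d] at hGdeg; omega
  have hGs : G.Splits := hs.taylor _
  have he {k : ℕ} (hk : k ≤ d) :
      G.roots.esymm k = (-1) ^ k * (G.coeff (d - k) / (c ^ m * a)) := by
    rw [hGs.esymm_roots_eq hG0 (hGdeg ▸ hk), hGdeg, hlc]
  have hcard : Multiset.card G.roots = d := hGdeg ▸ splits_iff_card_roots.mp hGs
  have he1 : G.roots.esymm 1 = -(f.coeff (d - 1) / a) := by
    rw [he (by omega), hcoeff (by omega), if_neg (by omega), add_zero]
    field_simp
  have he2 : f.coeff (d - 2) / a ≤ G.roots.esymm 2 := by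
    rw [he (by omega), hcoeff (by omega)]
    split_ifs with h2
    · have : 0 ≤ κ := mul_nonneg (hδ2 (by omega)) (Nat.cast_nonneg _)
      change _ ≤ _ * (c ^ m * (_ + m * κ * a) / _)
      rw [mul_div_mul_left _ _ (pow_ne_zero m hc), add_div, mul_div_cancel_right₀ _ ha]
      norm_num
      positivity
    · rw [add_zero, mul_div_mul_left _ _ (pow_ne_zero m hc)]
      norm_num
  have hep : (-1) ^ p * G.roots.esymm p = f.coeff (d - p) / a + m * κ := by
    rw [he hpf, hcoeff le_rfl, if_pos rfl]
    change _ * (_ * (c ^ m * (_ + m * κ * a) / _)) = _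
    rw [mul_div_mul_left _ _ (pow_ne_zero m hc), add_div, mul_div_cancel_right₀ _ ha, ← mul_assoc,
      ← mul_pow]
    norm_num
  have hbound := Multiset.abs_esymm_le_sqrt (s := G.roots)
    (S := (f.coeff (d - 1) / a) ^ 2 - 2 * (f.coeff (d - 2) / a)) (by rw [he1, neg_sq]; linarith) p
  rw [hcard] at hbound
  rwa [← hep, abs_mul, abs_pow, abs_neg, abs_one, one_pow, one_mul]

end Iterate

theorem exists_lt_abs_add_nat_mul {κ : ℝ} (hκ : κ ≠ 0) (w B : ℝ) :
    ∃ m₀ : ℕ, 0 < m₀ ∧ ∀ m ≥ m₀, B < |w + m * κ| := by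
  obtain ⟨N, hN⟩ := exists_nat_gt ((B + |w|) / |κ|)
  refine ⟨N + 1, N.succ_pos, fun m hm => ?_⟩
  have hmN : (N : ℝ) + 1 ≤ m := by exact_mod_cast hm
  rw [div_lt_iff₀ (abs_pos.mpr hκ)] at hN
  calc B < m * |κ| - |w| := by nlinarith [abs_nonneg κ]
    _ = |m * κ| - |w| := by rw [abs_mul, Nat.abs_cast]
    _ ≤ |w + m * κ| := by
        have := abs_sub_abs_le_abs_sub (m * κ) (-w)
        rwa [abs_neg, sub_neg_eq_add, add_comm] at this

theorem factorial_mul_mul_pow_sub_one_eq_pow_iff {a b c : ℝ} (hb : b ≠ 0) {n : ℕ} (hn : 0 < n) :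
    (n ! : ℝ) * a * b ^ (n - 1) = c ^ n ↔ a = b * ((c / b) ^ n / n !) := by
  obtain ⟨k, rfl⟩ : ∃ k, n = k + 1 := ⟨n - 1, by omega⟩
  have hfac : ((k + 1)! : ℝ) ≠ 0 := Nat.cast_ne_zero.mpr (factorial_ne_zero _)
  rw [Nat.add_sub_cancel, div_pow, _root_.pow_succ]
  constructor <;> intro h
  · field_simp
    linear_combination b * h
  · rw [h]
    field_simp
    ring

/-- If `α₀ ≠ 0`, `2α₂α₀ − α₁² ≥ 0`, `φ` is not of the form `c·e^{γx}` (witnessed by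
`p = min{n ≥ 2 : n!·αₙ·α₀^{n−1} ≠ α₁ⁿ}`), and `deg f ≥ p`, then eventually
`φ(D)^m f` has a nonreal zero. -/
theorem stmt1 (α : ℕ → ℝ) (h0 : α 0 ≠ 0)
    (h2 : 0 ≤ 2 * α 2 * α 0 - (α 1) ^ 2)
    (p : ℕ) (hp2 : 2 ≤ p)
    (hpne : (p ! : ℝ) * α p * α 0 ^ (p - 1) ≠ (α 1) ^ p)
    (hpmin : ∀ n, 2 ≤ n → n < p → (n ! : ℝ) * α n * α 0 ^ (n - 1) = (α 1) ^ n)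
    (f : Polynomial ℝ) (hdeg : p ≤ f.natDegree) :
    ∃ m₀ : ℕ, 0 < m₀ ∧ ∀ m ≥ m₀,
      ∃ z ∈ (((phiD α)^[m] f).map (algebraMap ℝ ℂ)).roots, z.im ≠ 0 := by
  set β := α 1 / α 0
  set δ : ℕ → ℝ := fun n => α n - α 0 * (β ^ n / n !)
  have hα : ∀ n, α n = α 0 * (β ^ n / n !) + δ n := fun n => by ring
  have hδ : ∀ n < p, δ n = 0 := by
    rintro (_ | n) hn
    · simp [δ]
    · refine sub_eq_zero.mpr ((factorial_mul_mul_pow_sub_one_eq_pow_iff h0 n.succ_pos).mp ?_)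
      rcases n with _ | n
      · simp
      · exact hpmin _ (by omega) hn
  have hδp : δ p ≠ 0 :=
    sub_ne_zero.mpr (mt (factorial_mul_mul_pow_sub_one_eq_pow_iff h0 (by omega)).mpr hpne)
  have hδ2 : p = 2 → 0 ≤ δ p / α 0 := by
    rintro rfl
    have : δ 2 / α 0 = (2 * α 2 * α 0 - α 1 ^ 2) / (2 * α 0 ^ 2) := by
      simp only [δ, β]
      field_simp
      norm_num
      ring
    rw [this]
    positivity
  have hκ : δ p / α 0 * f.natDegree.descFactorial p ≠ 0 :=
    mul_ne_zero (div_ne_zero hδp h0) (Nat.cast_ne_zero.mpr (descFactorial_pos.mpr hdeg).ne')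
  obtain ⟨m₀, hm₀, hgrowth⟩ := exists_lt_abs_add_nat_mul hκ _ _
  refine ⟨m₀, hm₀, fun m hm => ?_⟩
  by_contra! hreal
  exact (hgrowth m hm).not_ge (abs_coeff_add_mul_le_of_splits h0 hα hδ hp2 hδ2 hdeg
    (splits_of_forall_im_eq_zero hreal))
end

section
/- If β > 0 is a real number and d is a positive integer, then every complex zero of the polynomial exp(−βD²)M^d is real and simple. -/
/-!
Write `E d = exp(-βD²)M^d`. Since `exp(cD^p)` commutes with `D` and
`exp(cD^p) X = (X + p c D^{p-1}) exp(cD^p)`, we get `D E (d+1) = (d+1) E d` and the three-term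
recurrence `E (d+2) = X E (d+1) - 2β(d+1) E d`, so `E d` is a rescaled Hermite polynomial.

For any sequence with `P (n+2) = (X - b_{n+1}) P (n+1) - a_{n+1} P n`, `a, b` real and `a > 0`,
the Christoffel–Darboux identity at `x = z`, `y = conj z` reads
`(z - conj z) ∑_{k ≤ n} |P_k(z)|² / (a_1 ⋯ a_k) = 0` when `P_{n+1}(z) = 0`; the sum is at least
`|P_0(z)|² = 1`, so `z` is real. The recurrence also shows that consecutive terms have no common
root, which together with `D E d = d E (d-1)` makes the roots of `E d` simple.
-/

open Polynomial Nat

/-- The polynomial `exp(βD^p)M^d`, i.e. `∑_{k=0}^{⌊d/p⌋} (d!·βᵏ/(k!·(d−pk)!))·x^{d−pk}`. -/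
noncomputable def expD (β : ℂ) (p d : ℕ) : Polynomial ℂ :=
  ∑ k ∈ Finset.range (d / p + 1),
    Polynomial.C ((d ! : ℂ) * β ^ k / ((k ! : ℂ) * ((d - p * k)! : ℂ))) *
      Polynomial.X ^ (d - p * k)

open Finset ComplexConjugate

structure ThreeTermRecurrence (a b : ℕ → ℝ) (p : ℕ → ℂ[X]) : Prop where
  zero : p 0 = 1
  one : p 1 = X - C (b 0 : ℂ)
  succ_succ : ∀ n, p (n + 2) = (X - C (b (n + 1) : ℂ)) * p (n + 1) - C (a (n + 1) : ℂ) * p n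

namespace ThreeTermRecurrence

variable {a b : ℕ → ℝ} {p : ℕ → ℂ[X]}

theorem eval_conj (hp : ThreeTermRecurrence a b p) (z : ℂ) (n : ℕ) :
    (p n).eval (conj z) = conj ((p n).eval z) := by
  induction n using Nat.twoStepInduction with
  | zero => simp [hp.zero]
  | one => simp [hp.one]
  | more n ih₀ ih₁ => simp [hp.succ_succ, ih₀, ih₁]

theorem christoffel_darboux (hp : ThreeTermRecurrence a b p) (ha : ∀ n, a (n + 1) ≠ 0)
    (x y : ℂ) (n : ℕ) :
    (x - y) * ∑ k ∈ range (n + 1), (p k).eval x * (p k).eval y / ∏ i ∈ range k, (a (i + 1) : ℂ) =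
      ((p (n + 1)).eval x * (p n).eval y - (p n).eval x * (p (n + 1)).eval y) /
        ∏ i ∈ range n, (a (i + 1) : ℂ) := by
  induction n with
  | zero => simp [hp.zero, hp.one]
  | succ n ih =>
    have hw : ∏ i ∈ range n, (a (i + 1) : ℂ) ≠ 0 :=
      prod_ne_zero_iff.2 fun i _ => Complex.ofReal_ne_zero.2 (ha i)
    have ha' : (a (n + 1) : ℂ) ≠ 0 := Complex.ofReal_ne_zero.2 (ha n)
    rw [sum_range_succ, mul_add, ih, hp.succ_succ, prod_range_succ]
    simp only [eval_sub, eval_mul, eval_X, eval_C]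
    field_simp
    ring

theorem im_eq_zero_of_isRoot (hp : ThreeTermRecurrence a b p) (ha : ∀ n, 0 < a (n + 1))
    {n : ℕ} {z : ℂ} (hz : (p n).IsRoot z) : z.im = 0 := by
  obtain _ | n := n
  · simp [hp.zero] at hz
  have hw : ∀ k, 0 < ∏ i ∈ range k, a (i + 1) := fun k => prod_pos fun i _ => ha i
  have hCD := hp.christoffel_darboux (fun n => (ha n).ne') z (conj z) n
  simp only [hp.eval_conj, hz.eq_zero, map_zero, zero_mul, mul_zero, sub_zero, zero_div] at hCD
  have hsum :
      0 < ∑ k ∈ range (n + 1), Complex.normSq ((p k).eval z) / ∏ i ∈ range k, a (i + 1) := by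
    rw [sum_range_succ']
    refine add_pos_of_nonneg_of_pos (sum_nonneg fun k _ => ?_) (by simp [hp.zero])
    exact div_nonneg (Complex.normSq_nonneg _) (hw _).le
  have hsumC : ∑ k ∈ range (n + 1),
      (p k).eval z * conj ((p k).eval z) / ∏ i ∈ range k, (a (i + 1) : ℂ) ≠ 0 := by
    simp_rw [Complex.mul_conj]
    exact_mod_cast hsum.ne'
  have hz_conj := (mul_eq_zero.1 hCD).resolve_right hsumC
  exact Complex.conj_eq_iff_im.1 (sub_eq_zero.1 hz_conj).symm

theorem not_isRoot_and_isRoot_succ (hp : ThreeTermRecurrence a b p) (ha : ∀ n, a (n + 1) ≠ 0)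
    (z : ℂ) (n : ℕ) : ¬ ((p n).IsRoot z ∧ (p (n + 1)).IsRoot z) := by
  induction n with
  | zero => simp [hp.zero]
  | succ n ih =>
    rintro ⟨h₁, h₂⟩
    refine ih ⟨?_, h₁⟩
    rw [IsRoot, hp.succ_succ] at h₂
    simp only [eval_sub, eval_mul, eval_C, h₁.eq_zero, mul_zero, zero_sub, neg_eq_zero] at h₂
    exact (mul_eq_zero.1 h₂).resolve_left (Complex.ofReal_ne_zero.2 (ha n))

end ThreeTermRecurrence

theorem Polynomial.nodup_roots_of_not_isRoot_derivative {R : Type*} [CommRing R]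
    [IsDomain R] {f : R[X]} (h : ∀ z, f.IsRoot z → ¬ (derivative f).IsRoot z) :
    f.roots.Nodup := by
  classical
  refine Multiset.nodup_iff_count_le_one.2 fun z => ?_
  rw [count_roots]
  by_contra! hz
  have hf : f ≠ 0 := by rintro rfl; simp at hz
  obtain ⟨h₁, h₂⟩ := (one_lt_rootMultiplicity_iff_isRoot hf).1 hz
  exact h z h₁ h₂

-- `0 < p` matters: `d / 0 = 0`, so `expD c 0 d = X ^ d` rather than `exp c • X ^ d`.
theorem expD_eq_sum_iterate_derivative (c : ℂ) {p d N : ℕ} (hp : 0 < p) (hN : d / p < N) :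
    expD c p d = ∑ k ∈ range N, C (c ^ k / k !) * derivative^[p * k] (X ^ d) := by
  have hvanish : ∀ k ∈ range N, k ∉ range (d / p + 1) →
      C (c ^ k / k !) * derivative^[p * k] (X ^ d) = 0 := by
    intro k _ hk
    have hdk : d < p * k := by
      rw [mul_comm]; exact (Nat.div_lt_iff_lt_mul hp).1 (by simpa using hk)
    rw [iterate_derivative_X_pow_eq_C_mul, descFactorial_eq_zero_iff_lt.2 hdk]
    simp
  rw [expD, ← sum_subset (range_subset_range.2 hN) hvanish]
  refine sum_congr rfl fun k hk => ?_
  have hkd : p * k ≤ d := by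
    rw [mul_comm]; exact (Nat.le_div_iff_mul_le hp).1 (Nat.lt_succ_iff.1 (mem_range.1 hk))
  rw [iterate_derivative_X_pow_eq_C_mul, ← mul_assoc, ← C_mul, ← factorial_mul_descFactorial hkd]
  have : ((d - p * k)! : ℂ) ≠ 0 := Nat.cast_ne_zero.2 (factorial_ne_zero _)
  push_cast
  field_simp

theorem derivative_expD_succ (c : ℂ) {p : ℕ} (hp : 0 < p) (d : ℕ) :
    derivative (expD c p (d + 1)) = C ((d + 1 : ℕ) : ℂ) * expD c p d := by
  rw [expD_eq_sum_iterate_derivative c hp (N := d + 2) ((Nat.div_le_self _ _).trans_lt (by omega)),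
    expD_eq_sum_iterate_derivative c hp (N := d + 2) ((Nat.div_le_self _ _).trans_lt (by omega)),
    derivative_sum, mul_sum]
  refine sum_congr rfl fun k _ => ?_
  rw [derivative_C_mul, ← Function.iterate_succ_apply' derivative, Function.iterate_succ_apply,
    derivative_X_pow, iterate_derivative_C_mul, mul_left_comm, add_tsub_cancel_right]

theorem expD_succ (c : ℂ) {p : ℕ} (hp : 0 < p) (d : ℕ) :
    expD c p (d + 1) = X * expD c p d + C (p * c) * derivative^[p - 1] (expD c p d) := by
  rw [expD_eq_sum_iterate_derivative c hp (N := d + 2) ((Nat.div_le_self _ _).trans_lt (by omega))]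
  nth_rw 1 [expD_eq_sum_iterate_derivative c hp (N := d + 2)
    ((Nat.div_le_self _ _).trans_lt (by omega))]
  rw [expD_eq_sum_iterate_derivative c hp (N := d + 1) ((Nat.div_le_self _ _).trans_lt (by omega)),
    iterate_derivative_sum, mul_sum, mul_sum]
  simp_rw [pow_succ, iterate_derivative_mul_X, mul_add, sum_add_distrib]
  refine congrArg₂ (· + ·) (sum_congr rfl fun k _ => by ring) ?_
  rw [sum_range_succ', mul_zero, zero_smul, mul_zero, add_zero]
  refine sum_congr rfl fun k _ => ?_
  rw [iterate_derivative_C_mul, show p * (k + 1) - 1 = p - 1 + p * k by grind,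
    Function.iterate_add_apply, nsmul_eq_mul, ← mul_assoc, ← mul_assoc, ← C_eq_natCast, ← C_mul,
    ← C_mul]
  congr 2
  push_cast
  rw [factorial_succ]
  push_cast
  field_simp
  ring

theorem expD_two_succ_succ (c : ℂ) (d : ℕ) :
    expD c 2 (d + 2) = X * expD c 2 (d + 1) + C (2 * c * (d + 1 : ℕ)) * expD c 2 d := by
  rw [expD_succ c two_pos, show 2 - 1 = 1 from rfl, Function.iterate_one,
    derivative_expD_succ c two_pos, ← mul_assoc, ← C_mul]
  push_cast
  ring

theorem threeTermRecurrence_expD_neg_two (β : ℝ) :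
    ThreeTermRecurrence (fun n => 2 * β * n) 0 (fun d => expD (-β) 2 d) where
  zero := by simp [expD]
  one := by simp [expD]
  succ_succ n := by
    rw [expD_two_succ_succ, Pi.zero_apply, Complex.ofReal_zero, C_0, sub_zero, sub_eq_add_neg,
      ← neg_mul, ← C_neg]
    congr 3
    push_cast
    ring

theorem stmt5_general (β : ℝ) (hβ : 0 < β) (d : ℕ) :
    (expD (-(β : ℂ)) 2 d).roots.Nodup ∧
      ∀ z ∈ (expD (-(β : ℂ)) 2 d).roots, z.im = 0 := by
  have hrec := threeTermRecurrence_expD_neg_two β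
  have ha : ∀ n : ℕ, 0 < 2 * β * (n + 1 : ℕ) := fun n => by positivity
  refine ⟨nodup_roots_of_not_isRoot_derivative fun z hz hz' => ?_,
    fun z hz => hrec.im_eq_zero_of_isRoot ha (isRoot_of_mem_roots hz)⟩
  obtain _ | n := d
  · simp [expD] at hz
  rw [derivative_expD_succ _ two_pos, IsRoot, eval_mul, eval_C,
    mul_eq_zero_iff_left (by exact_mod_cast n.succ_ne_zero)] at hz'
  exact hrec.not_isRoot_and_isRoot_succ (fun n => (ha n).ne') z n ⟨hz', hz⟩

/-- If `β > 0` then every complex zero of `exp(−βD²)M^d` is real and simple. -/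
theorem stmt5 (β : ℝ) (hβ : 0 < β) (d : ℕ) (hd : 0 < d) :
    (expD (-(β : ℂ)) 2 d).roots.Nodup ∧
      ∀ z ∈ (expD (-(β : ℂ)) 2 d).roots, z.im = 0 :=
  stmt5_general β hβ d
end

section
/- If β > 0 is a real number and d is a positive integer, then the polynomial exp(βD²)M^d has exactly 2⌊d/2⌋ distinct purely imaginary zeros (zeros of the form it with t ∈ ℝ, t ≠ 0), and every nonzero complex zero of exp(βD²)M^d is purely imaginary. -/
open Polynomial Nat

/-!
Put `c = i√(2β)`, so that `c² = -2β`; comparing coefficients, `exp(βD²)M^d` evaluated at `c w`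
equals `c^d He_d(w)`, where `He_d` is the probabilists' Hermite polynomial (`hermite d`).
By induction along `He_{n+1} = X He_n - He_n'`, `He_n` has `n` distinct real zeros: at the zeros
`r₀ < ⋯ < r_{n-1}` of `He_n` the value `He_{n+1}(rᵢ) = -He_n'(rᵢ)` alternates in sign, and with
the signs of `He_{n+1}` at `±∞` the intermediate value theorem yields `n + 1` zeros interlacing
the `rᵢ`. So the zeros of `exp(βD²)M^d` are the `c rᵢ`, all on the imaginary axis, and `0` is
one of them exactly when the constant coefficient of `He_d` vanishes, i.e. when `d` is odd.
-/

open Finset Filter Lagrange Asymptotics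

theorem Nat.factorial_two_mul (k : ℕ) : (2 * k)! = 2 ^ k * k ! * (2 * k - 1)‼ := by
  cases k with
  | zero => rfl
  | succ k =>
    rw [show 2 * (k + 1) - 1 = 2 * k + 1 by omega, show 2 * (k + 1) = 2 * k + 1 + 1 by ring,
      factorial_eq_mul_doubleFactorial, show 2 * k + 1 + 1 = 2 * (k + 1) by ring,
      doubleFactorial_two_mul]

theorem Finset.sum_range_eq_sum_range_sub_two_mul {M : Type*} [AddCommMonoid M] (d : ℕ)
    {f : ℕ → M} (hf : ∀ j, Odd (d + j) → f j = 0) :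
    ∑ j ∈ range (d + 1), f j = ∑ k ∈ range (d / 2 + 1), f (d - 2 * k) := by
  rw [← sum_image (g := fun k => d - 2 * k) fun k hk l hl h => by
    simp only [coe_range, Set.mem_Iio] at hk hl h; omega]
  refine (sum_subset (fun j hj => ?_) fun j hjd hj => hf j ?_).symm
  · simp only [mem_image, mem_range] at hj ⊢
    omega
  · by_contra heven
    obtain ⟨m, hm⟩ := Nat.not_odd_iff_even.1 heven
    rw [mem_range] at hjd
    exact hj (mem_image.2 ⟨d - m, by simp only [mem_range]; omega, by omega⟩)

theorem exists_strictMono_zeros_of_alternating {m : ℕ} {f : ℝ → ℝ} (hf : Continuous f)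
    {x : Fin (m + 1) → ℝ} (hx : StrictMono x)
    (hsign : ∀ k : Fin (m + 1), 0 < (-1) ^ (m - k : ℕ) * f (x k)) :
    ∃ c : Fin m → ℝ, StrictMono c ∧ ∀ i, f (c i) = 0 := by
  have hzero (i : Fin m) : ∃ c ∈ Set.Ioo (x i.castSucc) (x i.succ), f c = 0 := by
    have hleft := hsign i.castSucc
    rw [Fin.val_castSucc, show m - i = m - (i + 1) + 1 by omega, pow_succ] at hleft
    obtain ⟨c, hc, hfc⟩ := intermediate_value_Ioo (hx i.castSucc_lt_succ).le
      (by fun_prop : Continuous fun y => (-1) ^ (m - (i + 1)) * f y).continuousOn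
      ⟨by linarith, hsign i.succ⟩
    exact ⟨c, hc, by simpa using hfc⟩
  choose c hc hfc using hzero
  refine ⟨c, fun i j hij => ?_, hfc⟩
  calc c i < x i.succ := (hc i).2
    _ ≤ x j.castSucc := hx.monotone (Fin.succ_le_castSucc_iff.2 hij)
    _ < c j := (hc j).1

theorem Polynomial.Monic.eq_nodal_of_isRoot {R ι : Type*} [CommRing R] [IsDomain R] [Fintype ι]
    {p : R[X]} (hp : p.Monic) (hdeg : p.natDegree = Fintype.card ι) {r : ι → R}
    (hr : Function.Injective r) (hroot : ∀ i, p.IsRoot (r i)) : p = nodal univ r := by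
  refine eq_of_degree_sub_lt_of_eval_index_eq univ hr.injOn ?_ fun i _ => ?_
  · rw [Finset.card_univ, ← hdeg, ← degree_eq_natDegree hp.ne_zero]
    refine degree_sub_lt_left ?_ hp.ne_zero (by rw [hp.leadingCoeff, nodal_monic.leadingCoeff])
    rw [degree_nodal, degree_eq_natDegree hp.ne_zero, hdeg, Finset.card_univ]
  · rw [(hroot i).eq_zero, eval_nodal_at_node (mem_univ i)]

theorem Polynomial.Monic.eventually_atTop_eval_pos {p : ℝ[X]} (hp : p.Monic)
    (hdeg : 0 < p.natDegree) : ∀ᶠ x in atTop, 0 < p.eval x :=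
  (p.tendsto_atTop_of_leadingCoeff_nonneg (natDegree_pos_iff_degree_pos.1 hdeg)
    (by rw [hp.leadingCoeff]; exact zero_le_one)).eventually_gt_atTop 0

theorem Polynomial.Monic.eventually_atBot_neg_one_pow_mul_eval_pos {p : ℝ[X]} (hp : p.Monic)
    (hdeg : 0 < p.natDegree) : ∀ᶠ x in atBot, 0 < (-1) ^ p.natDegree * p.eval x := by
  have hequiv := (IsEquivalent.refl (u := fun _ : ℝ => (-1 : ℝ) ^ p.natDegree)).mul
    p.isEquivalent_atBot_lead
  have hpow : Tendsto (fun x : ℝ => (-1) ^ p.natDegree * (p.leadingCoeff * x ^ p.natDegree))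
      atBot atTop := by
    simp only [hp.leadingCoeff, one_mul, ← mul_pow, neg_one_mul]
    exact (tendsto_pow_atTop hdeg.ne').comp tendsto_neg_atBot_atTop
  exact (hequiv.symm.tendsto_atTop hpow).eventually_gt_atTop 0

theorem neg_one_pow_mul_prod_erase_sub_pos {n : ℕ} {r : Fin n → ℝ} (hr : StrictMono r)
    (i : Fin n) : 0 < (-1) ^ (n - 1 - i : ℕ) * ∏ j ∈ univ.erase i, (r i - r j) := by
  have hsplit : univ.erase i = Iio i ∪ Ioi i := by
    ext j
    simp
  have hbelow : 0 < ∏ j ∈ Iio i, (r i - r j) :=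
    prod_pos fun j hj => sub_pos.2 (hr (mem_Iio.1 hj))
  have habove : 0 < ∏ j ∈ Ioi i, (r j - r i) :=
    prod_pos fun j hj => sub_pos.2 (hr (mem_Ioi.1 hj))
  have hflip :
      (-1) ^ (n - 1 - i : ℕ) * ∏ j ∈ Ioi i, (r i - r j) = ∏ j ∈ Ioi i, (r j - r i) := by
    rw [← Fin.card_Ioi, ← prod_neg]
    simp
  rw [hsplit, prod_union (disjoint_left.2 fun j hlt hgt => (mem_Iio.1 hlt).asymm (mem_Ioi.1 hgt)),
    mul_left_comm, hflip]
  positivity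

theorem Polynomial.Monic.X_mul_sub_derivative {R : Type*} [CommRing R] [Nontrivial R] {p : R[X]}
    (hp : p.Monic) :
    (X * p - derivative p).Monic ∧ (X * p - derivative p).natDegree = p.natDegree + 1 := by
  have hXp : (X * p).natDegree = p.natDegree + 1 := by
    rw [monic_X.natDegree_mul hp, natDegree_X, add_comm]
  have hlt : (derivative p).natDegree < (X * p).natDegree := by
    rw [hXp]
    exact (natDegree_derivative_le p).trans_lt (by omega)
  exact ⟨(monic_X.mul hp).sub_of_left (degree_lt_degree hlt),
    (natDegree_sub_eq_left_of_natDegree_lt hlt).trans hXp⟩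

theorem eval_X_mul_sub_derivative_nodal {R ι : Type*} [CommRing R] [DecidableEq ι]
    {s : Finset ι} (v : ι → R) {i : ι} (hi : i ∈ s) :
    eval (v i) (X * nodal s v - derivative (nodal s v)) = -∏ j ∈ s.erase i, (v i - v j) := by
  rw [eval_sub, eval_mul, eval_nodal_at_node hi, mul_zero, zero_sub,
    eval_nodal_derivative_eval_node_eq hi, eval_nodal]

theorem exists_strictMono_nodal_eq_X_mul_sub_derivative {n : ℕ} {r : Fin n → ℝ}
    (hr : StrictMono r) : ∃ r' : Fin (n + 1) → ℝ,
      StrictMono r' ∧ X * nodal univ r - derivative (nodal univ r) = nodal univ r' := by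
  set q := X * nodal univ r - derivative (nodal univ r)
  obtain ⟨hq, hqdeg⟩ : q.Monic ∧ q.natDegree = n + 1 := by
    simpa using (nodal_monic (s := univ) (v := r)).X_mul_sub_derivative
  have hnode (i : Fin n) : 0 < (-1) ^ (n - i : ℕ) * q.eval (r i) := by
    have := neg_one_pow_mul_prod_erase_sub_pos hr i
    rw [eval_X_mul_sub_derivative_nodal r (mem_univ i), show n - i = n - 1 - i + 1 by omega,
      pow_succ]
    linarith
  obtain ⟨b, hb, hrb⟩ := ((hq.eventually_atTop_eval_pos (by omega)).and
    (eventually_all.2 fun i => eventually_gt_atTop (r i))).exists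
  obtain ⟨a, ha, har, hab⟩ := ((hq.eventually_atBot_neg_one_pow_mul_eval_pos (by omega)).and
    ((eventually_all.2 fun i => eventually_lt_atBot (r i)).and (eventually_lt_atBot b))).exists
  set x : Fin (n + 2) → ℝ := Fin.cons a (Fin.snoc r b)
  have hx : StrictMono x := by
    refine Fin.strictMono_cons.2 ⟨fun j => ?_, ?_⟩
    · induction j using Fin.lastCases with
      | last => simpa using hab
      | cast i => simpa using har i
    · rw [← Fin.insertNth_last', Fin.strictMono_insertNth_iff]
      exact ⟨hr, fun i _ => hrb i, fun i hi => absurd hi (Fin.castSucc_lt_last i).not_ge⟩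
  have hsign (k : Fin (n + 2)) : 0 < (-1) ^ (n + 1 - k : ℕ) * q.eval (x k) := by
    induction k using Fin.cases with
    | zero => simpa [x, hqdeg] using ha
    | succ j =>
      induction j using Fin.lastCases with
      | last => simpa [x] using hb
      | cast i => simpa [x, show n + 1 - (i + 1) = n - i by omega] using hnode i
  obtain ⟨c, hc, hqc⟩ := exists_strictMono_zeros_of_alternating q.continuous hx hsign
  exact ⟨c, hc, hq.eq_nodal_of_isRoot (by simp [hqdeg]) hc.injective hqc⟩

theorem exists_strictMono_hermite_map_eq_nodal (n : ℕ) :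
    ∃ r : Fin n → ℝ, StrictMono r ∧ (hermite n).map (Int.castRingHom ℝ) = nodal univ r := by
  induction n with
  | zero => exact ⟨Fin.elim0, fun i => i.elim0, by simp [nodal]⟩
  | succ n ih =>
    obtain ⟨r, hr, hH⟩ := ih
    obtain ⟨r', hr', hH'⟩ := exists_strictMono_nodal_eq_X_mul_sub_derivative hr
    refine ⟨r', hr', ?_⟩
    rw [hermite_succ, Polynomial.map_sub, Polynomial.map_mul, map_X, ← derivative_map, hH, hH']

theorem coeff_hermite_zero_eq_zero_iff (n : ℕ) : (hermite n).coeff 0 = 0 ↔ Odd n := by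
  refine ⟨fun h => ?_, fun h => coeff_hermite_of_odd_add (by simpa using h)⟩
  by_contra hodd
  rw [coeff_hermite_of_even_add (by simpa using Nat.not_odd_iff_even.1 hodd)] at h
  simp [(doubleFactorial_pos _).ne'] at h

theorem card_filter_ne_zero_of_hermite_map_eq_nodal {n : ℕ} {r : Fin n → ℝ}
    (hr : Function.Injective r) (hH : (hermite n).map (Int.castRingHom ℝ) = nodal univ r) :
    #{i | r i ≠ 0} = 2 * (n / 2) := by
  have hzero : (∃ i, r i = 0) ↔ Odd n := by
    rw [← coeff_hermite_zero_eq_zero_iff, ← Int.cast_eq_zero (α := ℝ),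
      ← eq_intCast (Int.castRingHom ℝ), ← coeff_map, coeff_zero_eq_eval_zero, hH, eval_nodal,
      prod_eq_zero_iff]
    simp
  rcases Nat.even_or_odd n with heven | hodd
  · have hne : ∀ i, r i ≠ 0 := fun i hi => Nat.not_odd_iff_even.2 heven (hzero.1 ⟨i, hi⟩)
    rw [filter_true_of_mem fun i _ => hne i, Finset.card_univ, Fintype.card_fin,
      Nat.two_mul_div_two_of_even heven]
  · obtain ⟨i₀, hi₀⟩ := hzero.2 hodd
    have herase : ({i | r i ≠ 0} : Finset (Fin n)) = univ.erase i₀ := by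
      ext i
      simp [← hi₀, hr.ne_iff]
    rw [herase, card_erase_of_mem (mem_univ _), Finset.card_univ, Fintype.card_fin,
      Nat.two_mul_odd_div_two (Nat.odd_iff.1 hodd)]

theorem eval_mul_expD_two {β c : ℂ} (hc : c ^ 2 = -2 * β) (d : ℕ) (w : ℂ) :
    eval (c * w) (expD β 2 d) = c ^ d * aeval w (hermite d) := by
  rw [aeval_eq_sum_range, natDegree_hermite, Finset.sum_range_eq_sum_range_sub_two_mul d
    fun j hj => by rw [coeff_hermite_of_odd_add hj, zero_smul], mul_sum, expD, eval_finsetSum]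
  refine sum_congr rfl fun k hk => ?_
  have h2k : 2 * k ≤ d := by rw [mem_range] at hk; omega
  have hfact : d ! = d.choose (2 * k) * (2 ^ k * k ! * (2 * k - 1)‼) * (d - 2 * k)! := by
    rw [← Nat.factorial_two_mul, choose_mul_factorial_mul_factorial h2k]
  have hcd : c ^ d = c ^ (d - 2 * k) * (-1) ^ k * 2 ^ k * β ^ k := by
    rw [mul_assoc, mul_assoc, ← mul_pow, ← mul_pow, ← mul_assoc, neg_one_mul, ← hc, ← pow_mul,
      ← pow_add, Nat.sub_add_cancel h2k]
  rw [coeff_hermite_of_even_add ⟨d - k, by omega⟩, show d - (d - 2 * k) = 2 * k by omega,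
    Nat.mul_div_cancel_left _ two_pos, choose_symm h2k, hcd]
  simp only [eval_mul, eval_C, eval_pow, eval_X, zsmul_eq_mul]
  have hneg : ((-1 : ℂ) ^ k) ^ 2 = 1 := by rw [← pow_mul, pow_mul', neg_one_sq, one_pow]
  have hkfact : (k ! : ℂ) ≠ 0 := by exact_mod_cast k.factorial_ne_zero
  have hdkfact : ((d - 2 * k)! : ℂ) ≠ 0 := by exact_mod_cast (d - 2 * k).factorial_ne_zero
  push_cast [hfact]
  field_simp
  rw [hneg]
  ring

theorem aeval_hermite_eq_prod {n : ℕ} {r : Fin n → ℝ}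
    (hH : (hermite n).map (Int.castRingHom ℝ) = nodal univ r) (w : ℂ) :
    aeval w (hermite n) = ∏ i, (w - r i) := by
  rw [← aeval_map_algebraMap ℝ, algebraMap_int_eq, hH, nodal, map_prod]
  simp

theorem isRoot_expD_two_iff {β c : ℂ} (hc : c ^ 2 = -2 * β) (hc0 : c ≠ 0) {d : ℕ}
    {r : Fin d → ℝ} (hH : (hermite d).map (Int.castRingHom ℝ) = nodal univ r) (z : ℂ) :
    (expD β 2 d).IsRoot z ↔ ∃ i, c * r i = z := by
  obtain ⟨w, rfl⟩ : ∃ w, z = c * w := ⟨z / c, (mul_div_cancel₀ z hc0).symm⟩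
  rw [IsRoot.def, eval_mul_expD_two hc, aeval_hermite_eq_prod hH, _root_.mul_eq_zero,
    or_iff_right (pow_ne_zero d hc0), prod_eq_zero_iff]
  simp only [mem_univ, true_and, sub_eq_zero, mul_right_inj' hc0, eq_comm]

theorem stmt6_general (β : ℝ) (hβ : 0 < β) (d : ℕ) :
    {z : ℂ | (expD (β : ℂ) 2 d).IsRoot z ∧ z.re = 0 ∧ z ≠ 0}.ncard = 2 * (d / 2) ∧
      ∀ z : ℂ, (expD (β : ℂ) 2 d).IsRoot z → z ≠ 0 → z.re = 0 := by
  obtain ⟨r, hr, hH⟩ := exists_strictMono_hermite_map_eq_nodal d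
  set c : ℂ := Complex.I * √(2 * β)
  have hc : c ^ 2 = -2 * β := by
    rw [mul_pow, Complex.I_sq, ← Complex.ofReal_pow, Real.sq_sqrt (by positivity)]
    push_cast
    ring
  have hc0 : c ≠ 0 :=
    mul_ne_zero Complex.I_ne_zero (Complex.ofReal_ne_zero.2 (Real.sqrt_ne_zero'.2 (by positivity)))
  have hroots := isRoot_expD_two_iff hc hc0 hH
  have hre (i : Fin d) : (c * r i).re = 0 := by simp [c]
  refine ⟨?_, fun z hz _ => ?_⟩
  · have hset : {z : ℂ | (expD (β : ℂ) 2 d).IsRoot z ∧ z.re = 0 ∧ z ≠ 0} =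
        ({i | r i ≠ 0} : Finset (Fin d)).image (c * r ·) := by
      ext z
      rw [Set.mem_ofPred_eq, hroots, coe_image, Set.mem_image]
      constructor
      · rintro ⟨⟨i, rfl⟩, -, hz⟩
        exact ⟨i, by simpa using right_ne_zero_of_mul hz, rfl⟩
      · rintro ⟨i, hi, rfl⟩
        exact ⟨⟨i, rfl⟩, hre i, mul_ne_zero hc0 (by simpa using hi)⟩
    rw [hset, Set.ncard_coe_finset, card_image_of_injective _
      fun i j h => hr.injective (by simpa [hc0] using h),
      card_filter_ne_zero_of_hermite_map_eq_nodal hr.injective hH]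
  · obtain ⟨i, rfl⟩ := (hroots z).1 hz
    exact hre i

/-- If `β > 0` then `exp(βD²)M^d` has exactly `2⌊d/2⌋` distinct purely imaginary zeros,
and every nonzero zero of `exp(βD²)M^d` is purely imaginary. -/
theorem stmt6 (β : ℝ) (hβ : 0 < β) (d : ℕ) (hd : 0 < d) :
    {z : ℂ | (expD (β : ℂ) 2 d).IsRoot z ∧ z.re = 0 ∧ z ≠ 0}.ncard = 2 * (d / 2) ∧
      ∀ z : ℂ, (expD (β : ℂ) 2 d).IsRoot z → z ≠ 0 → z.re = 0 :=
  stmt6_general β hβ d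
end

section
/- Let ⟨Bₙ⟩ be an increasing sequence of positive real numbers with Bₘ·Bₙ ≤ B₀·B_{m+n} for all m, n ≥ 0, and let φ be a formal power series with complex coefficients satisfying φ ≺ ⟨n!Bₙ⟩. Suppose f is an entire function and ⟨f_N⟩ is a sequence of entire functions with f_N ≪ ⟨(n!Bₙ)^{−1}⟩ for every N, such that f_N → f uniformly on compact subsets of ℂ. Then for every positive integer m one has φ^m ≺ ⟨n!Bₙ⟩, all f_N and f belong to dom φ(D)^m, and φ(D)^m f_N → φ(D)^m f uniformly on compact subsets of ℂ as N → ∞. -/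
/-!
Write `g ≪ A` for an entire `g` with `‖g⁽ⁿ⁾(0)‖ ≤ A / (n! Bₙ)`, and let `‖φₙ‖ ≤ c (1 + n)^e Bₙ`.
Expanding `g⁽ⁿ⁾` in its Taylor series at `0` and using that `B` is increasing gives
`‖g⁽ⁿ⁾(z)‖ ≤ A e^‖z‖ / (n! Bₙ)`, so on `‖z‖ ≤ R` the series `∑ φₙ g⁽ⁿ⁾` is dominated by the
summable `c A e^R (1 + n)^e / n!` and converges locally uniformly. Since `n! k! ≤ (n + k)!` and
`Bₙ Bₖ ≤ B₀ B_{n+k}`, the Taylor coefficients of `φ(D) g` give `φ(D) g ≪ C A` with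
`C = c B₀ ∑ₖ (1 + k)^e / k!`; hence the class is stable under `φ(D)`, and the same domination
passes `f_N → f` through `φ(D)` (Tannery's theorem, uniformly in `z`). The bound on `φ^m` is the
Cauchy-product estimate, again from `Bᵢ Bⱼ ≤ B₀ B_{i+j}`.
-/

open Nat

/-- `domSeq phi f g` : the partial sums of `∑ₙ (coeff n phi)·f⁽ⁿ⁾` converge to `g`
uniformly on compact subsets of `ℂ`; i.e. `f ∈ dom phi(D)` and `phi(D)f = g`. -/
def domSeq (phi : PowerSeries ℂ) (f g : ℂ → ℂ) : Prop :=
  TendstoLocallyUniformly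
    (fun (N : ℕ) (z : ℂ) =>
      ∑ n ∈ Finset.range N, (PowerSeries.coeff n) phi * iteratedDeriv n f z)
    g Filter.atTop

/-- `domIter phi m f g` : `f ∈ dom phi(D)^m` and `phi(D)^m f = g`. -/
def domIter (phi : PowerSeries ℂ) (m : ℕ) (f g : ℂ → ℂ) : Prop :=
  ∃ F : ℕ → ℂ → ℂ, F 0 = f ∧ (∀ k < m, domSeq phi (F k) (F (k + 1))) ∧ F m = g

/-- `phi ≺ ⟨n!Bₙ⟩` for a formal power series `phi`. -/
def psPrec (B : ℕ → ℝ) (phi : PowerSeries ℂ) : Prop :=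
  ∃ c : ℝ, 0 < c ∧ ∃ e : ℝ, 0 ≤ e ∧ ∀ n : ℕ,
    ‖(n ! : ℂ) * (PowerSeries.coeff n) phi‖ <
      c * (1 + (n : ℝ)) ^ e * ((n ! : ℝ) * B n)

open Filter Topology

theorem tendstoUniformlyOn_iff_tendsto_sub {ι α G : Type*} [SeminormedAddCommGroup G]
    {F : ι → α → G} {f : α → G} {p : Filter ι} {s : Set α} :
    TendstoUniformlyOn F f p s ↔
      Tendsto (fun q : ι × α => F q.1 q.2 - f q.2) (p ×ˢ 𝓟 s) (𝓝 0) := by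
  rw [tendstoUniformlyOn_iff_tendsto, tendsto_uniformity_iff_dist_tendsto_zero,
    tendsto_zero_iff_norm_tendsto_zero (f := fun q : ι × α => F q.1 q.2 - f q.2)]
  simp only [dist_eq_norm, norm_sub_rev]

theorem tendstoUniformlyOn_tsum_of_dominated {ι α β G : Type*} [NormedAddCommGroup G]
    [CompleteSpace G] {F : ι → β → α → G} {f : β → α → G} {p : Filter ι} {s : Set α}
    {bound : β → ℝ} (h_sum : Summable bound) (hF : ∀ k, TendstoUniformlyOn (F · k) (f k) p s)
    (hF_le : ∀ i k, ∀ x ∈ s, ‖F i k x‖ ≤ bound k) (hf_le : ∀ k, ∀ x ∈ s, ‖f k x‖ ≤ bound k) :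
    TendstoUniformlyOn (fun i x => ∑' k, F i k x) (fun x => ∑' k, f k x) p s := by
  have hs : ∀ᶠ q : ι × α in p ×ˢ 𝓟 s, q.2 ∈ s := tendsto_snd.eventually (mem_principal_self s)
  have hdiff := tendsto_tsum_of_dominated_convergence (𝓕 := p ×ˢ 𝓟 s) (h_sum.mul_left 2)
    (f := fun q k => F q.1 k q.2 - f k q.2) (g := 0)
    (fun k => tendstoUniformlyOn_iff_tendsto_sub.1 (hF k)) <| by
      filter_upwards [hs] with q hq k
      exact (norm_sub_le _ _).trans (by linarith [hF_le q.1 k q.2 hq, hf_le k q.2 hq])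
  rw [Pi.zero_def, tsum_zero] at hdiff
  refine tendstoUniformlyOn_iff_tendsto_sub.2 (hdiff.congr' ?_)
  filter_upwards [hs] with q hq
  exact ((h_sum.of_norm_bounded (hF_le q.1 · q.2 hq)).tsum_sub
    (h_sum.of_norm_bounded (hf_le · q.2 hq)))

theorem summable_one_add_rpow_div_factorial (e : ℝ) :
    Summable (fun k : ℕ => (1 + (k : ℝ)) ^ e / k !) := by
  set m := ⌈e⌉₊
  refine .of_nonneg_of_le (fun k => by positivity) (fun k => ?_)
    ((Real.summable_pow_div_factorial (Real.exp 1)).mul_left (m ! * Real.exp 1))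
  have h1 : (1 + (k : ℝ)) ^ e ≤ (1 + (k : ℝ)) ^ m := by
    rw [← Real.rpow_natCast]
    exact Real.rpow_le_rpow_of_exponent_le (by simp) (Nat.le_ceil e)
  have h2 : (1 + (k : ℝ)) ^ m ≤ m ! * Real.exp 1 * Real.exp 1 ^ k := by
    have := Real.pow_div_factorial_le_exp (x := 1 + k) (by positivity) m
    rw [div_le_iff₀ (by positivity)] at this
    rw [Real.exp_one_pow]
    exact this.trans_eq (by rw [Real.exp_add]; ring)
  rw [← mul_div_assoc]
  gcongr
  exact h1.trans h2

theorem iteratedDeriv_iteratedDeriv {𝕜 F : Type*} [NontriviallyNormedField 𝕜]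
    [NormedAddCommGroup F] [NormedSpace 𝕜 F] (f : 𝕜 → F) (m n : ℕ) :
    iteratedDeriv m (iteratedDeriv n f) = iteratedDeriv (m + n) f := by
  simp only [iteratedDeriv_eq_iterate, Function.iterate_add_apply]

theorem TendstoLocallyUniformly.iteratedDeriv {ι : Type*} {p : Filter ι} {F : ι → ℂ → ℂ}
    {f : ℂ → ℂ} (hF : ∀ i, Differentiable ℂ (F i)) (h : TendstoLocallyUniformly F f p) (n : ℕ) :
    TendstoLocallyUniformly (fun i => iteratedDeriv n (F i)) (iteratedDeriv n f) p := by
  induction n with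
  | zero => simpa using h
  | succ n ih =>
    rw [← tendstoLocallyUniformlyOn_univ] at ih ⊢
    simpa only [iteratedDeriv_succ, Function.comp_def] using ih.deriv (.of_forall fun i =>
      ((hF i).contDiff.differentiable_iteratedDeriv' n).differentiableOn) isOpen_univ

theorem TendstoUniformlyOn.const_mul {ι α R : Type*} [SeminormedRing R] {F : ι → α → R}
    {f : α → R} {p : Filter ι} {s : Set α} (h : TendstoUniformlyOn F f p s) (a : R) :
    TendstoUniformlyOn (fun i x => a * F i x) (fun x => a * f x) p s :=
  (lipschitzWith_smul a).uniformContinuous.comp_tendstoUniformlyOn h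

theorem psPrec.norm_coeff_le {B : ℕ → ℝ} {phi : PowerSeries ℂ} (h : psPrec B phi) :
    ∃ c : ℝ, 0 < c ∧ ∃ e : ℝ, 0 ≤ e ∧ ∀ n : ℕ,
      ‖PowerSeries.coeff n phi‖ ≤ c * (1 + (n : ℝ)) ^ e * B n := by
  obtain ⟨c, hc, e, he, hb⟩ := h
  refine ⟨c, hc, e, he, fun n => ?_⟩
  have hn : (0 : ℝ) < n ! := mod_cast n.factorial_pos
  have := hb n
  rw [norm_mul, Complex.norm_natCast, mul_left_comm] at this
  exact (lt_of_mul_lt_mul_left this hn.le).le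

theorem psPrec_of_norm_coeff_le {B : ℕ → ℝ} (hB : ∀ n, 0 < B n) {phi : PowerSeries ℂ}
    {c e : ℝ} (he : 0 ≤ e) (h : ∀ n, ‖PowerSeries.coeff n phi‖ ≤ c * (1 + (n : ℝ)) ^ e * B n) :
    psPrec B phi := by
  refine ⟨|c| + 1, by positivity, e, he, fun n => ?_⟩
  have hpos : 0 < (1 + (n : ℝ)) ^ e * ((n ! : ℝ) * B n) := by
    have := hB n; have : (0 : ℝ) < n ! := mod_cast n.factorial_pos; positivity
  rw [norm_mul, Complex.norm_natCast]
  calc (n ! : ℝ) * ‖PowerSeries.coeff n phi‖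
      ≤ c * ((1 + (n : ℝ)) ^ e * ((n ! : ℝ) * B n)) := by
        have : (0 : ℝ) < n ! := mod_cast n.factorial_pos
        nlinarith [h n]
    _ < (|c| + 1) * ((1 + (n : ℝ)) ^ e * ((n ! : ℝ) * B n)) := by
        gcongr; linarith [le_abs_self c]
    _ = _ := by ring

theorem psPrec.mul {B : ℕ → ℝ} (hB : ∀ n, 0 < B n)
    (hBsub : ∀ m n : ℕ, B m * B n ≤ B 0 * B (m + n))
    {phi psi : PowerSeries ℂ} (hphi : psPrec B phi) (hpsi : psPrec B psi) :
    psPrec B (phi * psi) := by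
  obtain ⟨c₁, hc₁, e₁, he₁, h₁⟩ := hphi.norm_coeff_le
  obtain ⟨c₂, hc₂, e₂, he₂, h₂⟩ := hpsi.norm_coeff_le
  refine psPrec_of_norm_coeff_le hB (c := c₁ * c₂ * B 0) (by positivity : 0 ≤ e₁ + e₂ + 1)
    fun n => ?_
  have hn : (0 : ℝ) < 1 + n := by positivity
  have hterm : ∀ p ∈ Finset.HasAntidiagonal.antidiagonal n,
      ‖PowerSeries.coeff p.1 phi * PowerSeries.coeff p.2 psi‖ ≤
        c₁ * c₂ * B 0 * (1 + (n : ℝ)) ^ (e₁ + e₂) * B n := by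
    rintro ⟨i, j⟩ hij
    rw [Finset.HasAntidiagonal.mem_antidiagonal] at hij
    have hi : (1 + (i : ℝ)) ^ e₁ ≤ (1 + (n : ℝ)) ^ e₁ := by
      gcongr; exact_mod_cast hij ▸ le_self_add
    have hj : (1 + (j : ℝ)) ^ e₂ ≤ (1 + (n : ℝ)) ^ e₂ := by
      gcongr; exact_mod_cast hij ▸ le_add_self
    have hBij := hij ▸ hBsub i j
    have := hB i; have := hB j
    rw [norm_mul, Real.rpow_add hn]
    calc _ ≤ (c₁ * (1 + (i : ℝ)) ^ e₁ * B i) * (c₂ * (1 + (j : ℝ)) ^ e₂ * B j) :=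
          mul_le_mul (h₁ i) (h₂ j) (norm_nonneg _) (by positivity)
      _ ≤ (c₁ * (1 + (n : ℝ)) ^ e₁) * (c₂ * (1 + (n : ℝ)) ^ e₂) * (B i * B j) := by
          rw [mul_mul_mul_comm]; gcongr
      _ ≤ (c₁ * (1 + (n : ℝ)) ^ e₁) * (c₂ * (1 + (n : ℝ)) ^ e₂) * (B 0 * B n) := by
          gcongr
      _ = _ := by ring
  rw [PowerSeries.coeff_mul]
  calc _ ≤ ∑ _p ∈ Finset.HasAntidiagonal.antidiagonal n,
          c₁ * c₂ * B 0 * (1 + (n : ℝ)) ^ (e₁ + e₂) * B n :=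
        norm_sum_le_of_le _ hterm
    _ = c₁ * c₂ * B 0 * (1 + (n : ℝ)) ^ (e₁ + e₂ + 1) * B n := by
        rw [Finset.sum_const, Finset.Nat.card_antidiagonal, Real.rpow_add_one hn.ne', nsmul_eq_mul]
        push_cast; ring

theorem psPrec.pow {B : ℕ → ℝ} (hB : ∀ n, 0 < B n)
    (hBsub : ∀ m n : ℕ, B m * B n ≤ B 0 * B (m + n))
    {phi : PowerSeries ℂ} (hphi : psPrec B phi) {m : ℕ} (hm : 1 ≤ m) : psPrec B (phi ^ m) := by
  induction m, hm using Nat.le_induction with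
  | base => rwa [pow_one]
  | succ m _ ih => rw [pow_succ]; exact ih.mul hB hBsub hphi

/-- `φ(D) g` as the pointwise sum of `∑ₙ φₙ g⁽ⁿ⁾` (`0` wherever that series diverges). -/
noncomputable def diffOp (phi : PowerSeries ℂ) (g : ℂ → ℂ) : ℂ → ℂ :=
  fun z => ∑' n, PowerSeries.coeff n phi * iteratedDeriv n g z

/-- `g` is entire and `g ≪ ⟨A / (n! Bₙ)⟩`, with non-strict inequalities. -/
def TaylorBoundedBy (B : ℕ → ℝ) (A : ℝ) (g : ℂ → ℂ) : Prop :=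
  Differentiable ℂ g ∧ ∀ n, ‖iteratedDeriv n g 0‖ ≤ A / (n ! * B n)

theorem differentiable_sum_coeff_mul_iteratedDeriv (phi : PowerSeries ℂ) {g : ℂ → ℂ}
    (hg : Differentiable ℂ g) (N : ℕ) :
    Differentiable ℂ
      (fun z => ∑ n ∈ Finset.range N, PowerSeries.coeff n phi * iteratedDeriv n g z) :=
  .fun_sum fun n _ => (hg.contDiff.differentiable_iteratedDeriv' n).const_mul _

theorem TaylorBoundedBy.of_tendstoLocallyUniformly {B : ℕ → ℝ} {A : ℝ} {F : ℕ → ℂ → ℂ}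
    {f : ℂ → ℂ} (hF : ∀ N, TaylorBoundedBy B A (F N)) (hf : Differentiable ℂ f)
    (hFf : TendstoLocallyUniformly F f atTop) : TaylorBoundedBy B A f :=
  ⟨hf, fun n => le_of_tendsto' ((tendstoLocallyUniformlyOn_univ.2 (hFf.iteratedDeriv
    (fun N => (hF N).1) n)).tendsto_at (Set.mem_univ 0)).norm fun N => (hF N).2 n⟩

section TaylorBound

variable {B : ℕ → ℝ} (hB : ∀ n, 0 < B n)
include hB

theorem factorial_mul_pos (n : ℕ) : (0 : ℝ) < n ! * B n :=
  mul_pos (mod_cast n.factorial_pos) (hB n)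

theorem TaylorBoundedBy.nonneg {A : ℝ} {g : ℂ → ℂ} (hg : TaylorBoundedBy B A g) : 0 ≤ A := by
  have := mul_nonneg ((norm_nonneg _).trans (hg.2 0)) (factorial_mul_pos hB 0).le
  rwa [div_mul_cancel₀ _ (factorial_mul_pos hB 0).ne'] at this

theorem TaylorBoundedBy.norm_iteratedDeriv_le (hBmono : Monotone B) {A : ℝ} {g : ℂ → ℂ}
    (hg : TaylorBoundedBy B A g) (n : ℕ) (z : ℂ) :
    ‖iteratedDeriv n g z‖ ≤ A / (n ! * B n) * Real.exp ‖z‖ := by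
  have hT := Complex.hasSum_taylorSeries_of_entire
    (hg.1.contDiff.differentiable_iteratedDeriv' n) 0 z
  simp only [sub_zero, iteratedDeriv_iteratedDeriv] at hT
  have hexp : HasSum (fun k : ℕ => ‖z‖ ^ k / k !) (Real.exp ‖z‖) := by
    simpa [Real.exp_eq_exp_ℝ] using NormedSpace.expSeries_div_hasSum_exp ‖z‖
  refine hT.norm_le_of_bounded (hexp.mul_left _) fun k => ?_
  have hk : ‖iteratedDeriv (k + n) g 0‖ ≤ A / (n ! * B n) :=
    (hg.2 _).trans <| div_le_div_of_nonneg_left (hg.nonneg hB) (factorial_mul_pos hB n) <|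
      mul_le_mul (mod_cast Nat.factorial_le le_add_self) (hBmono le_add_self) (hB n).le
        (by positivity)
  rw [norm_smul, norm_smul, norm_inv, norm_pow, Complex.norm_natCast]
  calc _ ≤ (k ! : ℝ)⁻¹ * (‖z‖ ^ k * (A / (n ! * B n))) := by gcongr
    _ = _ := by ring

theorem div_factorial_mul_le (hBsub : ∀ m n : ℕ, B m * B n ≤ B 0 * B (m + n)) (n k : ℕ) :
    B k / ((n + k)! * B (n + k)) ≤ B 0 / (n ! * B n) / k ! := by
  have hk : (0 : ℝ) < k ! := mod_cast k.factorial_pos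
  rw [div_div, div_le_div_iff₀ (factorial_mul_pos hB _) (by positivity [factorial_mul_pos hB n])]
  have hfac : (n ! * k ! : ℝ) ≤ (n + k)! :=
    mod_cast Nat.le_of_dvd (Nat.factorial_pos _) (Nat.factorial_mul_factorial_dvd_factorial_add n k)
  calc B k * (n ! * B n * k !) = (n ! * k !) * (B n * B k) := by ring
    _ ≤ (n + k)! * (B 0 * B (n + k)) := by
        have := hB n; have := hB k
        exact mul_le_mul hfac (hBsub n k) (by positivity) (by positivity)
    _ = B 0 * ((n + k)! * B (n + k)) := by ring

end TaylorBound

section CoeffBound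

variable {B : ℕ → ℝ} (hB : ∀ n, 0 < B n) (hBmono : Monotone B)
  {phi : PowerSeries ℂ} {c e : ℝ} (hc : 0 ≤ c)
  (hphi : ∀ n, ‖PowerSeries.coeff n phi‖ ≤ c * (1 + (n : ℝ)) ^ e * B n)
  {A : ℝ} {g : ℂ → ℂ}

include hB hBmono hphi

theorem norm_coeff_mul_iteratedDeriv_le (hg : TaylorBoundedBy B A g) (n : ℕ) {R : ℝ} {z : ℂ}
    (hz : ‖z‖ ≤ R) :
    ‖PowerSeries.coeff n phi * iteratedDeriv n g z‖ ≤
      c * A * Real.exp R * ((1 + (n : ℝ)) ^ e / n !) := by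
  have hpos := factorial_mul_pos hB n
  rw [norm_mul]
  calc _ ≤ c * (1 + (n : ℝ)) ^ e * B n * (A / (n ! * B n) * Real.exp R) :=
        mul_le_mul (hphi n) ((hg.norm_iteratedDeriv_le hB hBmono n z).trans (by
          gcongr; exact div_nonneg (hg.nonneg hB) hpos.le)) (norm_nonneg _)
          ((norm_nonneg _).trans (hphi n))
    _ = _ := by have := (hB n).ne'; field_simp

theorem domSeq_diffOp (hg : TaylorBoundedBy B A g) : domSeq phi g (diffOp phi g) := by
  rw [domSeq, tendstoLocallyUniformly_iff_forall_isCompact]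
  intro K hK
  obtain ⟨R, hKR⟩ := hK.isBounded.subset_closedBall 0
  exact (tendstoUniformlyOn_tsum_nat
    ((summable_one_add_rpow_div_factorial e).mul_left (c * A * Real.exp R))
    fun n z hz => norm_coeff_mul_iteratedDeriv_le hB hBmono hphi hg n
      (mem_closedBall_zero_iff.1 hz)).mono hKR

include hc in
theorem TaylorBoundedBy.diffOp (hBsub : ∀ m n : ℕ, B m * B n ≤ B 0 * B (m + n))
    (hg : TaylorBoundedBy B A g) :
    TaylorBoundedBy B (c * B 0 * (∑' k : ℕ, (1 + (k : ℝ)) ^ e / k !) * A)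
      (_root_.diffOp phi g) := by
  have hpartial := differentiable_sum_coeff_mul_iteratedDeriv phi hg.1
  have hconv := domSeq_diffOp hB hBmono hphi hg
  refine ⟨differentiableOn_univ.1 <| (tendstoLocallyUniformlyOn_univ.2 hconv).differentiableOn
    (.of_forall fun N => (hpartial N).differentiableOn) isOpen_univ, fun n => ?_⟩
  have hlim : Tendsto
      (fun N => ∑ k ∈ Finset.range N, PowerSeries.coeff k phi * iteratedDeriv (n + k) g 0)
      atTop (𝓝 (iteratedDeriv n (_root_.diffOp phi g) 0)) := by
    refine ((tendstoLocallyUniformlyOn_univ.2 (hconv.iteratedDeriv hpartial n)).tendsto_at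
      (Set.mem_univ 0)).congr fun N => ?_
    rw [iteratedDeriv_fun_sum fun k _ =>
      ((hg.1.contDiff.differentiable_iteratedDeriv' k).const_mul _).contDiff.contDiffAt]
    simp only [iteratedDeriv_const_mul_field, iteratedDeriv_iteratedDeriv]
  have hA := hg.nonneg hB
  have hterm : ∀ k, ‖PowerSeries.coeff k phi * iteratedDeriv (n + k) g 0‖ ≤
      c * B 0 * A / (n ! * B n) * ((1 + (k : ℝ)) ^ e / k !) := fun k => by
    rw [norm_mul]
    calc _ ≤ c * (1 + (k : ℝ)) ^ e * B k * (A / ((n + k)! * B (n + k))) :=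
          mul_le_mul (hphi k) (hg.2 _) (norm_nonneg _) ((norm_nonneg _).trans (hphi k))
      _ = c * (1 + (k : ℝ)) ^ e * A * (B k / ((n + k)! * B (n + k))) := by ring
      _ ≤ c * (1 + (k : ℝ)) ^ e * A * (B 0 / (n ! * B n) / k !) := by
          have := div_factorial_mul_le hB hBsub n k
          gcongr
      _ = _ := by ring
  have hC : 0 ≤ c * B 0 * A / (n ! * B n) := by
    have := hB 0; have := factorial_mul_pos hB n; positivity
  refine le_of_tendsto' hlim.norm fun N => (norm_sum_le_of_le _ fun k _ => hterm k).trans ?_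
  rw [← Finset.mul_sum]
  calc _ ≤ c * B 0 * A / (n ! * B n) * ∑' k : ℕ, (1 + (k : ℝ)) ^ e / k ! := by
        gcongr
        exact (summable_one_add_rpow_div_factorial e).sum_le_tsum _ fun k _ => by positivity
    _ = _ := by ring

theorem tendstoLocallyUniformly_diffOp {F : ℕ → ℂ → ℂ} {f : ℂ → ℂ}
    (hF : ∀ N, TaylorBoundedBy B A (F N)) (hf : TaylorBoundedBy B A f)
    (hFf : TendstoLocallyUniformly F f atTop) :
    TendstoLocallyUniformly (fun N => diffOp phi (F N)) (diffOp phi f) atTop := by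
  rw [tendstoLocallyUniformly_iff_forall_isCompact]
  intro K hK
  obtain ⟨R, hKR⟩ := hK.isBounded.subset_closedBall 0
  refine (tendstoUniformlyOn_tsum_of_dominated
    (F := fun N n z => PowerSeries.coeff n phi * iteratedDeriv n (F N) z)
    ((summable_one_add_rpow_div_factorial e).mul_left (c * A * Real.exp R)) (fun n => ?_)
    (fun N n z hz => norm_coeff_mul_iteratedDeriv_le hB hBmono hphi (hF N) n
      (mem_closedBall_zero_iff.1 hz))
    (fun n z hz => norm_coeff_mul_iteratedDeriv_le hB hBmono hphi hf n
      (mem_closedBall_zero_iff.1 hz))).mono hKR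
  exact (tendstoLocallyUniformly_iff_forall_isCompact.1 (hFf.iteratedDeriv (fun N => (hF N).1) n)
    _ (isCompact_closedBall 0 R)).const_mul _

variable (hBsub : ∀ m n : ℕ, B m * B n ≤ B 0 * B (m + n))
include hc hBsub

theorem TaylorBoundedBy.iterate_diffOp (hg : TaylorBoundedBy B A g) (k : ℕ) :
    TaylorBoundedBy B ((c * B 0 * (∑' k : ℕ, (1 + (k : ℝ)) ^ e / k !)) ^ k * A)
      ((_root_.diffOp phi)^[k] g) := by
  induction k with
  | zero => simpa using hg
  | succ k ih =>
    rw [Function.iterate_succ_apply', pow_succ, mul_comm (_ ^ k), mul_assoc]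
    exact ih.diffOp hB hBmono hc hphi hBsub

theorem domIter_iterate_diffOp (hg : TaylorBoundedBy B A g) (m : ℕ) :
    domIter phi m g ((diffOp phi)^[m] g) :=
  ⟨fun k => (diffOp phi)^[k] g, rfl, fun k _ => by
    simp only [Function.iterate_succ_apply']
    exact domSeq_diffOp hB hBmono hphi (hg.iterate_diffOp hB hBmono hc hphi hBsub k), rfl⟩

theorem tendstoLocallyUniformly_iterate_diffOp {F : ℕ → ℂ → ℂ} {f : ℂ → ℂ}
    (hF : ∀ N, TaylorBoundedBy B A (F N)) (hf : TaylorBoundedBy B A f)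
    (hFf : TendstoLocallyUniformly F f atTop) (m : ℕ) :
    TendstoLocallyUniformly (fun N => (diffOp phi)^[m] (F N)) ((diffOp phi)^[m] f) atTop := by
  induction m with
  | zero => simpa using hFf
  | succ m ih =>
    simp only [Function.iterate_succ_apply']
    exact tendstoLocallyUniformly_diffOp hB hBmono hphi
      (fun N => (hF N).iterate_diffOp hB hBmono hc hphi hBsub m)
      (hf.iterate_diffOp hB hBmono hc hphi hBsub m) ih

end CoeffBound

/-- Corollary to Lemma 3.2: under the hypotheses of Lemma 3.2, for every `m ≥ 1` one has
`phi^m ≺ ⟨n!Bₙ⟩`, all `f_N` and `f` belong to `dom phi(D)^m`, and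
`phi(D)^m f_N → phi(D)^m f` uniformly on compact subsets of `ℂ`. -/
theorem stmt9 (B : ℕ → ℝ) (hBpos : ∀ n, 0 < B n) (hBmono : Monotone B)
    (hBsub : ∀ m n : ℕ, B m * B n ≤ B 0 * B (m + n))
    (phi : PowerSeries ℂ) (hphi : psPrec B phi)
    (f : ℂ → ℂ) (hf : Differentiable ℂ f)
    (F : ℕ → ℂ → ℂ) (hFdiff : ∀ N, Differentiable ℂ (F N))
    (hFll : ∀ N n, ‖iteratedDeriv n (F N) 0‖ < ((n ! : ℝ) * B n)⁻¹)
    (hFconv : TendstoLocallyUniformly F f Filter.atTop) :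
    ∀ m : ℕ, 1 ≤ m →
      psPrec B (phi ^ m) ∧
      ∃ (G : ℕ → ℂ → ℂ) (g : ℂ → ℂ),
        (∀ N, domIter phi m (F N) (G N)) ∧ domIter phi m f g ∧
        TendstoLocallyUniformly G g Filter.atTop := by
  intro m hm
  obtain ⟨c, hc, e, -, hcoeff⟩ := hphi.norm_coeff_le
  have hFb : ∀ N, TaylorBoundedBy B 1 (F N) := fun N =>
    ⟨hFdiff N, fun n => by simpa only [one_div] using (hFll N n).le⟩
  have hfb : TaylorBoundedBy B 1 f := .of_tendstoLocallyUniformly hFb hf hFconv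
  exact ⟨hphi.pow hBpos hBsub hm, _, _,
    fun N => domIter_iterate_diffOp hBpos hBmono hc.le hcoeff hBsub (hFb N) m,
    domIter_iterate_diffOp hBpos hBmono hc.le hcoeff hBsub hfb m,
    tendstoLocallyUniformly_iterate_diffOp hBpos hBmono hc.le hcoeff hBsub hFb hfb hFconv m⟩
end
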